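/- Soundness of the extended filter on conjunction: let A = B, and suppose filter(A,B,c₀) = ⟨A₀,B₀⟩ and filter(A,B,c₁) = ⟨A₁,B₁⟩ are each sound, meaning every C ∈ γ(A) with C ⊨ cᵢ satisfies C ∈ γ(Aᵢ), and every C ∈ γ(B) with C ⊭ cᵢ satisfies C ∈ γ(Bᵢ); suppose also that γ(X ⊓ Y) ⊇ γ(X) ∩ γ(Y) and γ(X ⊔ Y) ⊇ γ(X) ∪ γ(Y), and that C ⊨ c₀ ∧ c₁ iff C ⊨ c₀ and C ⊨ c₁. Then filter(A,B,c₀ ∧ c₁) := ⟨A₀ ⊓ A₁, B₀ ⊔ (A₀ ⊓ B₁)⟩ is sound for the conjunction: every C ∈ γ(A) with C ⊨ c₀ ∧ c₁ is in γ(A₀ ⊓ A₁), and every C ∈ γ(A) with C ⊭ (c₀ ∧ c₁) is in γ(B₀ ⊔ (A₀ ⊓ B₁)). -/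
import Mathlib

/-- Soundness of the extended filter on conjunction: if the two-output filters
for the atomic conditions `c₀` and `c₁` are sound (taking `A = B`), then the
pair `⟨A₀ ⊓ A₁, B₀ ⊔ (A₀ ⊓ B₁)⟩` is a sound filter for the conjunction. -/
theorem extended_filter_conjunction_sound {D Conc : Type} [Lattice D]
    (γ : D → Set Conc)
    (hmeet : ∀ X Y : D, γ X ∩ γ Y ⊆ γ (X ⊓ Y))
    (hjoin : ∀ X Y : D, γ X ∪ γ Y ⊆ γ (X ⊔ Y))
    (sat₀ sat₁ : Conc → Prop)
    (A A₀ B₀ A₁ B₁ : D)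
    (h0pos : ∀ C ∈ γ A, sat₀ C → C ∈ γ A₀)
    (h0neg : ∀ C ∈ γ A, ¬ sat₀ C → C ∈ γ B₀)
    (h1pos : ∀ C ∈ γ A, sat₁ C → C ∈ γ A₁)
    (h1neg : ∀ C ∈ γ A, ¬ sat₁ C → C ∈ γ B₁) :
    (∀ C ∈ γ A, sat₀ C ∧ sat₁ C → C ∈ γ (A₀ ⊓ A₁)) ∧
    (∀ C ∈ γ A, ¬ (sat₀ C ∧ sat₁ C) → C ∈ γ (B₀ ⊔ (A₀ ⊓ B₁))) := by
  constructor
  · intro C hC ⟨h0, h1⟩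
    exact hmeet _ _ ⟨h0pos C hC h0, h1pos C hC h1⟩
  · intro C hC hn
    by_cases h0 : sat₀ C
    · have h1 : ¬ sat₁ C := fun h1 => hn ⟨h0, h1⟩
      exact hjoin _ _ (Or.inr (hmeet _ _ ⟨h0pos C hC h0, h1neg C hC h1⟩))
    · exact hjoin _ _ (Or.inl (h0neg C hC h0))
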